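/- Let (X,p) be a TVS-cone metric space over E with cone P, fix e ∈ int P, and let φ : E → E be continuous with φ(P) ⊆ P, φ increasing on P (if a, b ∈ P and a ≤ b then φ(a) ≤ φ(b)), φ(0) = 0, and φ(r·e) ≪ r·e for every real r > 0. Define ψ : [0,∞) → ℝ by ψ(r) = ξ_e(φ(r·e)). Then ψ is continuous and increasing on [0,∞), ψ(0) = 0, ψ(t) < t for every t > 0, and for any map T : X → X satisfying p(Tx, Ty) ≤ φ(p(x,y)) for all x, y ∈ X, one has d_p(Tx, Ty) ≤ ψ(d_p(x, y)) for all x, y ∈ X. -/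

import Mathlib

/-!
The scalarization `ξ_e y` is the least `t` with `y ≤ t • e`; since `P` is closed and `e ≫ 0`
this infimum is attained, and `ξ_e y ≤ t ↔ y ≤ t • e`, `ξ_e y < t ↔ y ≪ t • e`. These two
characterizations make `ξ_e` monotone and continuous. Then `ψ` inherits continuity and
monotonicity from `φ`, `ψ t < t` is `φ (t • e) ≪ t • e`, and
`p (Tx) (Ty) ≤ φ (p x y) ≤ φ (ξ_e (p x y) • e)` because `p x y ≤ ξ_e (p x y) • e`.
-/

open Filter Topology

section Defs

variable {E : Type*} [AddCommGroup E] [Module ℝ E] [TopologicalSpace E]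

/-- `P` is a closed, pointed convex cone with nonempty interior in the TVS `E`. -/
structure IsTVSCone (P : Set E) : Prop where
  add_mem : ∀ ⦃a⦄, a ∈ P → ∀ ⦃b⦄, b ∈ P → a + b ∈ P
  smul_mem : ∀ (r : ℝ), 0 ≤ r → ∀ ⦃a⦄, a ∈ P → r • a ∈ P
  pointed : ∀ a, a ∈ P → -a ∈ P → a = 0
  isClosed : IsClosed P
  int_nonempty : (interior P).Nonempty

/-- `a ≤ b` with respect to the cone `P`. -/
def ConeLe (P : Set E) (a b : E) : Prop := b - a ∈ P

/-- `a ≪ b` with respect to the cone `P`. -/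
def ConeLt (P : Set E) (a b : E) : Prop := b - a ∈ interior P

/-- `p : X × X → E` is a TVS-cone metric over the cone `P`. -/
structure IsConeMetric (P : Set E) {X : Type*} (p : X → X → E) : Prop where
  nonneg : ∀ x y, ConeLe P 0 (p x y)
  eq_zero_iff : ∀ x y, p x y = 0 ↔ x = y
  symm : ∀ x y, p x y = p y x
  triangle : ∀ x y z, ConeLe P (p x y) (p x z + p z y)

/-- The sequence `x` cone-converges to `a`. -/
def ConeConverges (P : Set E) {X : Type*} (p : X → X → E) (x : ℕ → X) (a : X) : Prop :=
  ∀ c, c ∈ interior P → ∃ N, ∀ n ≥ N, ConeLt P (p (x n) a) c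

/-- The sequence `x` is cone-Cauchy. -/
def ConeCauchy (P : Set E) {X : Type*} (p : X → X → E) (x : ℕ → X) : Prop :=
  ∀ c, c ∈ interior P → ∃ N, ∀ n ≥ N, ∀ m ≥ N, ConeLt P (p (x n) (x m)) c

/-- `(X, p)` is cone-complete. -/
def ConeComplete (P : Set E) {X : Type*} (p : X → X → E) : Prop :=
  ∀ x : ℕ → X, ConeCauchy P p x → ∃ a, ConeConverges P p x a

/-- The nonlinear scalarization ξ_e(y) = inf {t : t • e - y ∈ P}. -/
noncomputable def xiScal (P : Set E) (e y : E) : ℝ := sInf {t : ℝ | t • e - y ∈ P}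

/-- The open ball `B(x, c) = {y : p x y ≪ c}`. -/
def coneBall (P : Set E) {X : Type*} (p : X → X → E) (x : X) (c : E) : Set X :=
  {y | ConeLt P (p x y) c}

/-- The cone metric topology `τ_p`, generated by the balls `B(x,c)`, `c ≫ 0`. -/
def coneTopology (P : Set E) {X : Type*} (p : X → X → E) : TopologicalSpace X :=
  TopologicalSpace.generateFrom {s | ∃ x c, c ∈ interior P ∧ s = coneBall P p x c}

end Defs

section ConeScalarization

variable {E : Type*} [AddCommGroup E] [Module ℝ E] [TopologicalSpace E] {P : Set E} {e : E}

theorem ConeLe.trans (hP : IsTVSCone P) {a b c : E} (hab : ConeLe P a b) (hbc : ConeLe P b c) :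
    ConeLe P a c := by
  have h := hP.add_mem hbc hab
  rwa [sub_add_sub_cancel] at h

namespace IsTVSCone

theorem zero_mem (hP : IsTVSCone P) : (0 : E) ∈ P := by
  obtain ⟨a, ha⟩ := hP.int_nonempty
  simpa using hP.smul_mem 0 le_rfl (interior_subset ha)

theorem smul_mem_iff_nonneg (hP : IsTVSCone P) (he : e ∈ P) (he0 : e ≠ 0) {t : ℝ} :
    t • e ∈ P ↔ 0 ≤ t := by
  refine ⟨fun ht => ?_, fun ht => hP.smul_mem t ht he⟩
  by_contra! hneg
  have h := hP.smul_mem (-t) (by linarith) he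
  rw [neg_smul] at h
  rcases smul_eq_zero.1 (hP.pointed _ ht h) with h | h
  · exact hneg.ne h
  · exact he0 h

theorem smul_sub_mem_of_le (hP : IsTVSCone P) (he : e ∈ P) {y : E} {s t : ℝ}
    (hs : s • e - y ∈ P) (hst : s ≤ t) : t • e - y ∈ P := by
  have h := hP.add_mem hs (hP.smul_mem (t - s) (by linarith) he)
  rwa [sub_smul, sub_add_sub_cancel'] at h

theorem smul_mem_interior [ContinuousConstSMul ℝ E] (hP : IsTVSCone P) {r : ℝ} (hr : 0 < r)
    {a : E} (ha : a ∈ interior P) : r • a ∈ interior P := by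
  refine interior_maximal ?_ ((isOpenMap_smul₀ hr.ne') _ isOpen_interior) ⟨a, ha, rfl⟩
  rintro _ ⟨b, hb, rfl⟩
  exact hP.smul_mem r hr.le (interior_subset hb)

theorem add_mem_interior [IsTopologicalAddGroup E] (hP : IsTVSCone P) {a b : E} (ha : a ∈ P)
    (hb : b ∈ interior P) : a + b ∈ interior P := by
  refine interior_maximal ?_ ((isOpenMap_add_left a) _ isOpen_interior) ⟨b, hb, rfl⟩
  rintro _ ⟨c, hc, rfl⟩
  exact hP.add_mem ha (interior_subset hc)

theorem exists_smul_sub_mem [IsTopologicalAddGroup E] [ContinuousSMul ℝ E] (hP : IsTVSCone P)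
    (he : e ∈ interior P) (y : E) : ∃ t : ℝ, t • e - y ∈ P := by
  have hev : ∀ᶠ s in 𝓝[>] (0 : ℝ), e - s • y ∈ interior P := by
    refine eventually_nhdsWithin_of_eventually_nhds ?_
    have hc : Continuous fun s : ℝ => e - s • y := by fun_prop
    exact hc.continuousAt.preimage_mem_nhds (isOpen_interior.mem_nhds (by simpa using he))
  obtain ⟨s, hs, hs_pos⟩ := (hev.and self_mem_nhdsWithin).exists
  refine ⟨s⁻¹, ?_⟩
  have h := hP.smul_mem s⁻¹ (inv_nonneg.2 (le_of_lt hs_pos)) (interior_subset hs)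
  rwa [smul_sub, smul_smul, inv_mul_cancel₀ (ne_of_gt hs_pos), one_smul] at h

theorem ne_zero_of_mem_interior [Nontrivial E] [IsTopologicalAddGroup E] [ContinuousSMul ℝ E]
    (hP : IsTVSCone P) (he : e ∈ interior P) : e ≠ 0 := by
  rintro rfl
  have hneg (y : E) : -y ∈ P := by
    simpa using hP.exists_smul_sub_mem he y
  obtain ⟨a, ha⟩ := exists_ne (0 : E)
  exact ha (hP.pointed a (by simpa using hneg (-a)) (hneg a))

end IsTVSCone

theorem xiScal_of_subsingleton [Subsingleton E] (hP : IsTVSCone P) (y : E) : xiScal P e y = 0 := by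
  have hPuniv : P = Set.univ := Set.eq_univ_of_forall fun x =>
    Subsingleton.elim 0 x ▸ hP.zero_mem
  simp [xiScal, hPuniv]

variable [IsTopologicalAddGroup E] [ContinuousSMul ℝ E]

theorem bddBelow_smul_sub_mem (hP : IsTVSCone P) (he : e ∈ interior P) (he0 : e ≠ 0) (y : E) :
    BddBelow {t : ℝ | t • e - y ∈ P} := by
  by_contra hbdd
  have hall (t : ℝ) : t • e - y ∈ P := by
    obtain ⟨s, hs, hst⟩ := not_bddBelow_iff.1 hbdd t
    exact hP.smul_sub_mem_of_le (interior_subset he) hs hst.le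
  -- `-e - s • y = s • ((-s⁻¹) • e - y)` lies in `P` for `s > 0`; let `s → 0⁺`.
  have hmem : ∀ᶠ s in 𝓝[>] (0 : ℝ), -e - s • y ∈ P := by
    filter_upwards [self_mem_nhdsWithin] with s (hs : 0 < s)
    have h := hP.smul_mem s hs.le (hall (-s⁻¹))
    rwa [smul_sub, smul_smul, mul_neg, mul_inv_cancel₀ hs.ne', neg_smul, one_smul] at h
  have hlim : Tendsto (fun s : ℝ => -e - s • y) (𝓝[>] 0) (𝓝 (-e)) := by
    have hc : Continuous fun s : ℝ => -e - s • y := by fun_prop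
    simpa using (hc.tendsto 0).mono_left nhdsWithin_le_nhds
  exact he0 (hP.pointed e (interior_subset he) (hP.isClosed.mem_of_tendsto hlim hmem))

theorem xiScal_smul_sub_mem (hP : IsTVSCone P) (he : e ∈ interior P) (he0 : e ≠ 0) (y : E) :
    xiScal P e y • e - y ∈ P :=
  IsClosed.csInf_mem (hP.isClosed.preimage (by fun_prop)) (hP.exists_smul_sub_mem he y)
    (bddBelow_smul_sub_mem hP he he0 y)

theorem xiScal_le_iff (hP : IsTVSCone P) (he : e ∈ interior P) (he0 : e ≠ 0) {y : E} {t : ℝ} :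
    xiScal P e y ≤ t ↔ t • e - y ∈ P := by
  refine ⟨fun h => ?_, fun h => csInf_le (bddBelow_smul_sub_mem hP he he0 y) h⟩
  exact hP.smul_sub_mem_of_le (interior_subset he) (xiScal_smul_sub_mem hP he he0 y) h

theorem xiScal_lt_iff (hP : IsTVSCone P) (he : e ∈ interior P) (he0 : e ≠ 0) {y : E} {t : ℝ} :
    xiScal P e y < t ↔ t • e - y ∈ interior P := by
  constructor
  · intro h
    have h' := hP.add_mem_interior (xiScal_smul_sub_mem hP he he0 y)
      (hP.smul_mem_interior (sub_pos.2 h) he)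
    rwa [sub_smul, sub_add_sub_cancel'] at h'
  · intro h
    have hev : ∀ᶠ s in 𝓝[<] t, s • e - y ∈ interior P := by
      refine eventually_nhdsWithin_of_eventually_nhds ?_
      have hc : Continuous fun s : ℝ => s • e - y := by fun_prop
      exact hc.continuousAt.preimage_mem_nhds (isOpen_interior.mem_nhds h)
    obtain ⟨s, hs, hst⟩ := (hev.and self_mem_nhdsWithin).exists
    exact lt_of_le_of_lt ((xiScal_le_iff hP he he0).2 (interior_subset hs)) hst

theorem xiScal_mono (hP : IsTVSCone P) (he : e ∈ interior P) (he0 : e ≠ 0) {y z : E}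
    (h : ConeLe P y z) : xiScal P e y ≤ xiScal P e z :=
  (xiScal_le_iff hP he he0).2 (h.trans hP (xiScal_smul_sub_mem hP he he0 z))

theorem xiScal_nonneg (hP : IsTVSCone P) (he : e ∈ interior P) (he0 : e ≠ 0) {y : E}
    (hy : y ∈ P) : 0 ≤ xiScal P e y := by
  rw [← hP.smul_mem_iff_nonneg (interior_subset he) he0]
  simpa using hP.add_mem (xiScal_smul_sub_mem hP he he0 y) hy

theorem xiScal_zero (hP : IsTVSCone P) (he : e ∈ interior P) (he0 : e ≠ 0) :
    xiScal P e 0 = 0 :=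
  le_antisymm ((xiScal_le_iff hP he he0).2 (by simpa using hP.zero_mem))
    (xiScal_nonneg hP he he0 hP.zero_mem)

theorem continuous_xiScal (hP : IsTVSCone P) (he : e ∈ interior P) (he0 : e ≠ 0) :
    Continuous (xiScal P e) := by
  refine OrderTopology.continuous_iff.2 fun t => ⟨?_, ?_⟩
  · have h : xiScal P e ⁻¹' Set.Ioi t = (fun y => t • e - y) ⁻¹' Pᶜ := by
      ext y
      simp only [Set.mem_preimage, Set.mem_Ioi, Set.mem_compl_iff, ← xiScal_le_iff hP he he0,
        not_le]
    rw [h]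
    exact hP.isClosed.isOpen_compl.preimage (by fun_prop)
  · have h : xiScal P e ⁻¹' Set.Iio t = (fun y => t • e - y) ⁻¹' interior P := by
      ext y
      exact xiScal_lt_iff hP he he0
    rw [h]
    exact isOpen_interior.preimage (by fun_prop)

end ConeScalarization

theorem stmt_18_general {E X : Type*} [AddCommGroup E] [Module ℝ E] [TopologicalSpace E]
    [IsTopologicalAddGroup E] [ContinuousSMul ℝ E]
    (P : Set E) (hP : IsTVSCone P) (p : X → X → E) (hp : IsConeMetric P p)
    (e : E) (he : e ∈ interior P) (φ : E → E) (hφcont : Continuous φ)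
    (hφmono : ∀ a ∈ P, ∀ b ∈ P, ConeLe P a b → ConeLe P (φ a) (φ b))
    (hφ0 : φ 0 = 0)
    (hφlt : ∀ r : ℝ, 0 < r → ConeLt P (φ (r • e)) (r • e)) :
    ContinuousOn (fun r : ℝ => xiScal P e (φ (r • e))) (Set.Ici 0) ∧
    MonotoneOn (fun r : ℝ => xiScal P e (φ (r • e))) (Set.Ici 0) ∧
    xiScal P e (φ ((0 : ℝ) • e)) = 0 ∧
    (∀ t : ℝ, 0 < t → xiScal P e (φ (t • e)) < t) ∧
    (∀ T : X → X, (∀ x y : X, ConeLe P (p (T x) (T y)) (φ (p x y))) →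
      ∀ x y : X, xiScal P e (p (T x) (T y)) ≤ xiScal P e (φ ((xiScal P e (p x y)) • e))) := by
  rcases subsingleton_or_nontrivial E with hE | hE
  · simp only [xiScal_of_subsingleton hP]
    exact ⟨continuousOn_const, monotoneOn_const, trivial, fun _ ht => ht, fun _ _ _ _ => le_rfl⟩
  have he0 := hP.ne_zero_of_mem_interior he
  have hsmul_mem {r : ℝ} (hr : 0 ≤ r) : r • e ∈ P := hP.smul_mem r hr (interior_subset he)
  refine ⟨?_, ?_, ?_, ?_, ?_⟩
  · exact ((continuous_xiScal hP he he0).comp (by fun_prop)).continuousOn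
  · intro a ha b hb hab
    refine xiScal_mono hP he he0 (hφmono _ (hsmul_mem ha) _ (hsmul_mem hb) ?_)
    simpa [ConeLe, ← sub_smul] using hsmul_mem (sub_nonneg.2 hab)
  · rw [zero_smul, hφ0, xiScal_zero hP he he0]
  · exact fun t ht => (xiScal_lt_iff hP he he0).2 (hφlt t ht)
  · intro T hT x y
    have hpP : p x y ∈ P := by simpa [ConeLe] using hp.nonneg x y
    refine xiScal_mono hP he he0 ((hT x y).trans hP (hφmono _ hpP _ ?_ ?_))
    · exact hsmul_mem (xiScal_nonneg hP he he0 hpP)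
    · exact xiScal_smul_sub_mem hP he he0 (p x y)

/-- with `ψ r = ξ_e (φ (r • e))`, `ψ` is continuous and increasing on `[0,∞)`,
`ψ 0 = 0`, `ψ t < t` for `t > 0`, and any `T` with `p (Tx) (Ty) ≤ φ (p x y)` satisfies
`d_p (Tx) (Ty) ≤ ψ (d_p x y)`. -/
theorem stmt_18 {E X : Type*} [AddCommGroup E] [Module ℝ E] [TopologicalSpace E]
    [IsTopologicalAddGroup E] [ContinuousSMul ℝ E] [T2Space E] [Nonempty X]
    (P : Set E) (hP : IsTVSCone P) (p : X → X → E) (hp : IsConeMetric P p)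
    (e : E) (he : e ∈ interior P) (φ : E → E) (hφcont : Continuous φ)
    (hφP : ∀ a ∈ P, φ a ∈ P)
    (hφmono : ∀ a ∈ P, ∀ b ∈ P, ConeLe P a b → ConeLe P (φ a) (φ b))
    (hφ0 : φ 0 = 0)
    (hφlt : ∀ r : ℝ, 0 < r → ConeLt P (φ (r • e)) (r • e)) :
    ContinuousOn (fun r : ℝ => xiScal P e (φ (r • e))) (Set.Ici 0) ∧
    MonotoneOn (fun r : ℝ => xiScal P e (φ (r • e))) (Set.Ici 0) ∧
    xiScal P e (φ ((0 : ℝ) • e)) = 0 ∧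
    (∀ t : ℝ, 0 < t → xiScal P e (φ (t • e)) < t) ∧
    (∀ T : X → X, (∀ x y : X, ConeLe P (p (T x) (T y)) (φ (p x y))) →
      ∀ x y : X, xiScal P e (p (T x) (T y)) ≤ xiScal P e (φ ((xiScal P e (p x y)) • e))) :=
  stmt_18_general P hP p hp e he φ hφcont hφmono hφ0 hφlt
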